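/- Let d ≥ 1, σ > 0, and let μ be the d-fold product measure on ℝ^d whose coordinates are i.i.d. real Gaussian with mean 0 and variance σ². Then for every η ∈ (0, 1), μ( { g ∈ ℝ^d : ∑_{i=1}^d g_i² ≥ σ²( d + 2√(d·log(1/η)) + 2·log(1/η) ) } ) ≤ η. (Lemma A.2, Gaussian vector norm bound of Laurent–Massart type, as used in the paper to control the DP noise vector.) -/

import Mathlib

open Matrix

/-- Operator norm of a square real matrix induced by the Euclidean norm. -/
noncomputable def matOpNorm {d : ℕ} (A : Matrix (Fin d) (Fin d) ℝ) : ℝ :=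
  ‖Matrix.toEuclideanCLM (𝕜 := ℝ) A‖

/-- Euclidean norm of a vector in ℝ^d. -/
noncomputable def vnorm {d : ℕ} (v : Fin d → ℝ) : ℝ :=
  Real.sqrt (∑ i, (v i) ^ 2)

/-- Frobenius norm of a square real matrix. -/
noncomputable def frobNorm {d : ℕ} (A : Matrix (Fin d) (Fin d) ℝ) : ℝ :=
  Real.sqrt (∑ i, ∑ j, (A i j) ^ 2)

/-- Inverse of the (unique symmetric positive definite) square root of a
positive definite matrix: `M^{-1/2}`. -/
noncomputable def pdInvSqrt {d : ℕ} {M : Matrix (Fin d) (Fin d) ℝ} (hM : M.PosDef) :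
    Matrix (Fin d) (Fin d) ℝ :=
  (hM.posSemidef.1.eigenvectorUnitary.1 * diagonal ((↑) ∘ (√·) ∘ hM.posSemidef.1.eigenvalues) *
    (star hM.posSemidef.1.eigenvectorUnitary : Matrix (Fin d) (Fin d) ℝ))⁻¹

/-- Smallest eigenvalue of a real symmetric matrix, via the Rayleigh quotient
(infimum of `vᵀ A v` over Euclidean-unit vectors `v`). -/
noncomputable def lamMin {d : ℕ} (A : Matrix (Fin d) (Fin d) ℝ) : ℝ :=
  ⨅ v : {v : Fin d → ℝ // ∑ i, (v i) ^ 2 = 1}, dotProduct v.1 (A *ᵥ v.1)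

/-- Largest eigenvalue of a real symmetric matrix, via the Rayleigh quotient
(supremum of `vᵀ A v` over Euclidean-unit vectors `v`). -/
noncomputable def lamMax {d : ℕ} (A : Matrix (Fin d) (Fin d) ℝ) : ℝ :=
  ⨆ v : {v : Fin d → ℝ // ∑ i, (v i) ^ 2 = 1}, dotProduct v.1 (A *ᵥ v.1)

/-- Loewner order on real symmetric matrices: `A ⪯ B` iff `B - A` is positive
semidefinite. -/
def loewnerLE {d : ℕ} (A B : Matrix (Fin d) (Fin d) ℝ) : Prop :=
  (B - A).PosSemidef

/-!
Chernoff's bound for `S = ∑ gᵢ²`: for `2cv < 1` one has `E[exp (c gᵢ²)] = (1 - 2cv)^{-1/2}`, so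
`P(S ≥ ε) ≤ exp (-cε) (1 - 2cv)^{-n/2}`. Writing the threshold as `v n (1 + 2r + 2r²)` with
`x = n r²` and taking `c = r / ((1 + 2r) v)`, i.e. `1 - 2cv = (1 + 2r)⁻¹`, the estimate
`log y ≤ (y - y⁻¹) / 2` (for `y ≥ 1`) at `y = 1 + 2r` makes the exponent exactly `-x`.
-/

open MeasureTheory ProbabilityTheory Real
open scoped NNReal

section GaussianSquare

variable {ι : Type*} [Fintype ι] {v : ℝ≥0} {c : ℝ}

lemma gaussianPDFReal_zero_mul_exp_mul_sq (x : ℝ) :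
    gaussianPDFReal 0 v x * exp (c * x ^ 2) =
      (√(2 * π * v))⁻¹ * exp (-((1 - 2 * c * v) / (2 * v)) * x ^ 2) := by
  rw [gaussianPDFReal, mul_assoc, ← exp_add]
  by_cases hv : (v : ℝ) = 0
  · simp [hv]
  congr 2
  field_simp
  ring

lemma integrable_exp_mul_sq_gaussianReal (hv : v ≠ 0) (hc : 2 * c * v < 1) :
    Integrable (fun x ↦ exp (c * x ^ 2)) (gaussianReal 0 v) := by
  have hb : 0 < (1 - 2 * c * v) / (2 * v) := div_pos (by linarith) (by positivity)
  rw [gaussianReal_of_var_ne_zero _ hv,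
    integrable_withDensity_iff_integrable_smul' (measurable_gaussianPDF 0 v)
      (ae_of_all _ fun _ ↦ gaussianPDF_lt_top)]
  simp only [toReal_gaussianPDF, smul_eq_mul, gaussianPDFReal_zero_mul_exp_mul_sq]
  exact (integrable_exp_neg_mul_sq hb).const_mul _

-- For `2 * c * v ≥ 1` both sides are junk `0`: the integrand is not integrable.
lemma integral_exp_mul_sq_gaussianReal (hv : v ≠ 0) :
    ∫ x, exp (c * x ^ 2) ∂gaussianReal 0 v = (√(1 - 2 * c * v))⁻¹ := by
  rw [integral_gaussianReal_eq_integral_smul hv]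
  simp only [smul_eq_mul, gaussianPDFReal_zero_mul_exp_mul_sq]
  rw [integral_const_mul, integral_gaussian, ← Real.sqrt_inv, ← Real.sqrt_mul (by positivity),
    ← Real.sqrt_inv]
  congr 1
  field_simp

lemma mgf_sum_sq_pi_gaussianReal (hv : v ≠ 0) (hc : 2 * c * v < 1) :
    Integrable (fun g : ι → ℝ ↦ exp (c * ∑ i, g i ^ 2)) (Measure.pi fun _ ↦ gaussianReal 0 v) ∧
      mgf (fun g : ι → ℝ ↦ ∑ i, g i ^ 2) (Measure.pi fun _ ↦ gaussianReal 0 v) c =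
        (√(1 - 2 * c * v))⁻¹ ^ Fintype.card ι := by
  have hprod (g : ι → ℝ) : exp (c * ∑ i, g i ^ 2) = ∏ i, exp (c * g i ^ 2) := by
    rw [Finset.mul_sum, exp_sum]
  simp only [mgf, hprod]
  refine ⟨.fintype_prod fun _ ↦ integrable_exp_mul_sq_gaussianReal hv hc, ?_⟩
  rw [integral_fintype_prod_eq_pow (fun x ↦ exp (c * x ^ 2)),
    integral_exp_mul_sq_gaussianReal hv]

lemma measureReal_sum_sq_ge_le_exp_mul (hv : v ≠ 0) (hc₀ : 0 ≤ c) (hc : 2 * c * v < 1)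
    (ε : ℝ) :
    (Measure.pi fun _ : ι ↦ gaussianReal 0 v).real {g | ε ≤ ∑ i, g i ^ 2} ≤
      exp (-c * ε) * (√(1 - 2 * c * v))⁻¹ ^ Fintype.card ι := by
  obtain ⟨hint, hmgf⟩ := mgf_sum_sq_pi_gaussianReal (ι := ι) hv hc
  exact hmgf ▸ measure_ge_le_exp_mul_mgf ε hc₀ hint

end GaussianSquare

lemma log_le_half_sub_inv {y : ℝ} (hy : 1 ≤ y) : log y ≤ (y - y⁻¹) / 2 := by
  rw [← sinh_log (by linarith)]
  exact self_le_sinh_iff.mpr (log_nonneg hy)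

lemma half_log_one_add_two_mul_sub_le {r : ℝ} (hr : 0 ≤ r) :
    log (1 + 2 * r) / 2 - r * (1 + 2 * r + 2 * r ^ 2) / (1 + 2 * r) ≤ -r ^ 2 := by
  have hlog := log_le_half_sub_inv (y := 1 + 2 * r) (by linarith)
  have hexact : ((1 + 2 * r) - (1 + 2 * r)⁻¹) / 2 / 2 -
      r * (1 + 2 * r + 2 * r ^ 2) / (1 + 2 * r) = -r ^ 2 := by
    field_simp
    ring
  linarith

section LaurentMassart

variable {ι : Type*} [Fintype ι] {v : ℝ≥0}

lemma measureReal_sum_sq_ge_le_exp_neg_card_mul_sq (hv : v ≠ 0) {r : ℝ} (hr : 0 ≤ r) :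
    (Measure.pi fun _ : ι ↦ gaussianReal 0 v).real
        {g | v * (Fintype.card ι * (1 + 2 * r + 2 * r ^ 2)) ≤ ∑ i, g i ^ 2} ≤
      exp (-(Fintype.card ι * r ^ 2)) := by
  set n : ℝ := (Fintype.card ι : ℝ)
  have hpos : 0 < 1 + 2 * r := by linarith
  set c := r / ((1 + 2 * r) * v) with hc_def
  have hcv : 1 - 2 * c * v = (1 + 2 * r)⁻¹ := by
    rw [hc_def]
    field_simp
    ring
  have hc : 2 * c * v < 1 := by
    have : 0 < (1 + 2 * r)⁻¹ := by positivity
    linarith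
  have hmgf : (√(1 - 2 * c * v))⁻¹ ^ Fintype.card ι = exp (n * (log (1 + 2 * r) / 2)) := by
    rw [hcv, Real.sqrt_inv, inv_inv, ← exp_log (Real.sqrt_pos.2 hpos), ← exp_nat_mul,
      log_sqrt hpos.le]
  calc _ ≤ exp (-c * (v * (n * (1 + 2 * r + 2 * r ^ 2)))) * exp (n * (log (1 + 2 * r) / 2)) :=
        hmgf ▸ measureReal_sum_sq_ge_le_exp_mul hv (by positivity) hc _
    _ = exp (n * (log (1 + 2 * r) / 2 - r * (1 + 2 * r + 2 * r ^ 2) / (1 + 2 * r))) := by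
        rw [← exp_add, hc_def]
        congr 1
        field_simp
        ring
    _ ≤ exp (-(n * r ^ 2)) := by
        gcongr
        nlinarith [half_log_one_add_two_mul_sub_le hr, show (0 : ℝ) ≤ n by positivity]

theorem measure_sum_sq_ge_le_ofReal_exp_neg [Nonempty ι] (hv : v ≠ 0) {x : ℝ} (hx : 0 ≤ x) :
    Measure.pi (fun _ : ι ↦ gaussianReal 0 v)
        {g | v * (Fintype.card ι + 2 * √(Fintype.card ι * x) + 2 * x) ≤ ∑ i, g i ^ 2} ≤
      ENNReal.ofReal (exp (-x)) := by
  set n : ℝ := (Fintype.card ι : ℝ)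
  have hn : 0 < n := by simp [n, Fintype.card_pos]
  set r := √(x / n)
  have hx_eq : x = n * r ^ 2 := by
    rw [Real.sq_sqrt (by positivity)]
    field_simp
  have hsqrt : √(n * x) = n * r := by
    rw [hx_eq, ← mul_assoc, ← sq, ← mul_pow, Real.sqrt_sq (by positivity)]
  rw [hsqrt, hx_eq, ← ofReal_measureReal]
  refine ENNReal.ofReal_le_ofReal ?_
  convert measureReal_sum_sq_ge_le_exp_neg_card_mul_sq hv (ι := ι) (Real.sqrt_nonneg (x / n))
    using 5
  ring

end LaurentMassart

/-- Lemma A.2, Laurent–Massart type Gaussian norm bound: for the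
`d`-fold product of centered Gaussians with variance `σ²`, the mass of
`{g : ∑ g_i² ≥ σ²(d + 2√(d·log(1/η)) + 2·log(1/η))}` is at most `η`. -/
theorem stmt14 (d : ℕ) (hd : 1 ≤ d) (σ : ℝ) (hσ : 0 < σ)
    (η : ℝ) (hη : η ∈ Set.Ioo (0 : ℝ) 1) :
    (MeasureTheory.Measure.pi fun _ : Fin d =>
        ProbabilityTheory.gaussianReal 0 ⟨σ ^ 2, sq_nonneg σ⟩)
      {g : Fin d → ℝ |
        σ ^ 2 * ((d : ℝ) + 2 * Real.sqrt ((d : ℝ) * Real.log (1 / η)) + 2 * Real.log (1 / η)) ≤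
          ∑ i, (g i) ^ 2} ≤ ENNReal.ofReal η := by
  obtain ⟨hη₀, hη₁⟩ := hη
  have : NeZero d := ⟨by omega⟩
  have hv : (⟨σ ^ 2, sq_nonneg σ⟩ : ℝ≥0) ≠ 0 :=
    fun h ↦ (pow_pos hσ 2).ne' (congrArg NNReal.toReal h)
  have hlog : 0 ≤ log (1 / η) := log_nonneg (one_le_one_div hη₀ hη₁.le)
  have hexp : exp (-log (1 / η)) = η := by rw [one_div, log_inv, neg_neg, exp_log hη₀]
  have h := measure_sum_sq_ge_le_ofReal_exp_neg (ι := Fin d) hv hlog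
  rwa [Fintype.card_fin, hexp] at h
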